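/- Let D > 0 and let F : [0,D] → [0,D] be a non-increasing function such that whenever U is uniformly distributed on [0,D], the random variable F(U) is also uniformly distributed on [0,D]. Then F(d) = D - d for all d ∈ [0,D]. -/
import Mathlib


open MeasureTheory

/-- If `F : [0,D] → [0,D]` is non-increasing and pushes the uniform measure on `[0,D]`
forward to the uniform measure on `[0,D]`, then `F d = D - d` on `[0,D]`. -/
theorem uniform_pushforward_antitone_eq_reflection
    (D : ℝ) (hD : 0 < D) (F : ℝ → ℝ)
    (hmaps : ∀ d ∈ Set.Icc (0 : ℝ) D, F d ∈ Set.Icc (0 : ℝ) D)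
    (hanti : ∀ d₁ ∈ Set.Icc (0 : ℝ) D, ∀ d₂ ∈ Set.Icc (0 : ℝ) D, d₁ ≤ d₂ → F d₂ ≤ F d₁)
    (hpush : Measure.map F (volume.restrict (Set.Icc (0 : ℝ) D))
      = volume.restrict (Set.Icc (0 : ℝ) D)) :
    ∀ d ∈ Set.Icc (0 : ℝ) D, F d = D - d := by
  have hae : AEMeasurable F (volume.restrict (Set.Icc (0:ℝ) D)) := by
    by_contra h
    rw [Measure.map_of_not_aemeasurable h] at hpush
    have h0 : (volume.restrict (Set.Icc (0:ℝ) D)) (Set.Icc 0 D) = 0 := by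
      rw [← hpush]; simp
    rw [Measure.restrict_apply_self, Real.volume_Icc] at h0
    simp at h0
    linarith
  intro d hd
  obtain ⟨hd0, hdD⟩ := hd
  obtain ⟨hF0, hFD⟩ := hmaps d ⟨hd0, hdD⟩
  have h1 : F d ≤ D - d := by
    have hpre : Set.Icc (0:ℝ) d ⊆ F ⁻¹' Set.Icc (F d) D := by
      intro u hu
      exact ⟨hanti u ⟨hu.1, le_trans hu.2 hdD⟩ d ⟨hd0, hdD⟩ hu.2,
        (hmaps u ⟨hu.1, le_trans hu.2 hdD⟩).2⟩
    have hle := measure_mono (μ := volume.restrict (Set.Icc (0:ℝ) D)) hpre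
    have hmap : (volume.restrict (Set.Icc (0:ℝ) D)) (F ⁻¹' Set.Icc (F d) D)
        = ENNReal.ofReal (D - F d) := by
      have := Measure.map_apply_of_aemeasurable hae (measurableSet_Icc (a := F d) (b := D))
      rw [hpush] at this
      rw [← this, Measure.restrict_apply measurableSet_Icc,
        Set.inter_eq_left.mpr (Set.Icc_subset_Icc hF0 le_rfl), Real.volume_Icc]
    have hL : (volume.restrict (Set.Icc (0:ℝ) D)) (Set.Icc 0 d) = ENNReal.ofReal d := by
      rw [Measure.restrict_apply measurableSet_Icc,
        Set.inter_eq_left.mpr (Set.Icc_subset_Icc le_rfl hdD), Real.volume_Icc]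
      ring_nf
    rw [hL, hmap] at hle
    have := (ENNReal.ofReal_le_ofReal_iff (by linarith)).mp hle
    linarith
  have h2 : D - d ≤ F d := by
    have hpre : Set.Icc d D ⊆ F ⁻¹' Set.Icc 0 (F d) := by
      intro u hu
      exact ⟨(hmaps u ⟨le_trans hd0 hu.1, hu.2⟩).1,
        hanti d ⟨hd0, hdD⟩ u ⟨le_trans hd0 hu.1, hu.2⟩ hu.1⟩
    have hle := measure_mono (μ := volume.restrict (Set.Icc (0:ℝ) D)) hpre
    have hmap : (volume.restrict (Set.Icc (0:ℝ) D)) (F ⁻¹' Set.Icc 0 (F d))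
        = ENNReal.ofReal (F d) := by
      have := Measure.map_apply_of_aemeasurable hae (measurableSet_Icc (a := (0:ℝ)) (b := F d))
      rw [hpush] at this
      rw [← this, Measure.restrict_apply measurableSet_Icc,
        Set.inter_eq_left.mpr (Set.Icc_subset_Icc le_rfl hFD), Real.volume_Icc]
      ring_nf
    have hL : (volume.restrict (Set.Icc (0:ℝ) D)) (Set.Icc d D) = ENNReal.ofReal (D - d) := by
      rw [Measure.restrict_apply measurableSet_Icc,
        Set.inter_eq_left.mpr (Set.Icc_subset_Icc hd0 le_rfl), Real.volume_Icc]
    rw [hL, hmap] at hle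
    have := (ENNReal.ofReal_le_ofReal_iff hF0).mp hle
    linarith
  linarith
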